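/- Let p > 2, let U ⊂ ℝ² be open, let u : U → ℝ be twice differentiable at x_0 ∈ U with ∇u(x_0) ≠ 0, and suppose Δu(x_0) + (p-2) ⟨D²u(x_0) ∇u(x_0), ∇u(x_0)⟩ / |∇u(x_0)|² = 0. Let φ := (u_x − i u_y)/2 be the complex gradient, regarded as a map U → ℝ², with Wirtinger derivatives φ_z = (φ_x − i φ_y)/2 and φ_{z̄} = (φ_x + i φ_y)/2, and let J_φ(x_0) denote the determinant of the real Jacobian matrix of φ at x_0 (so J_φ = |φ_z|² − |φ_{z̄}|²). Then J_φ(x_0) ≥ (1/(p-1)) ( |φ_z(x_0)|² + |φ_{z̄}(x_0)|² ). -/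

import Mathlib

/-!
Write `a = u_xx`, `b = u_xy`, `c = u_yy` at `x₀`. Then `|φ_z|² = ((a - c)² + 4b²)/16` and
`|φ_z̄|² = (a + c)²/16`, so the bound says `p (a + c)² ≤ (p - 2) ((a - c)² + 4b²)`. The equation
says that the Rayleigh quotient of `D²u` in the direction `∇u` is `-(a + c)/(p - 2)`; by
Cauchy–Schwarz it differs from the mean `(a + c)/2` of the eigenvalues by at most half their gap
`√((a - c)² + 4b²)`. This gives `p² (a + c)² ≤ (p - 2)² ((a - c)² + 4b²)`, which is stronger
since `p - 2 < p`.
-/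

open Real

noncomputable section

/-- Partial derivative of `u : ℝ² → ℝ` in the `x`-direction. -/
def ux (u : ℝ × ℝ → ℝ) (x : ℝ × ℝ) : ℝ := fderiv ℝ u x (1, 0)

/-- Partial derivative of `u : ℝ² → ℝ` in the `y`-direction. -/
def uy (u : ℝ × ℝ → ℝ) (x : ℝ × ℝ) : ℝ := fderiv ℝ u x (0, 1)

/-- The complex gradient `φ = ∂u/∂z = (u_x - i u_y)/2` of `u : ℝ² → ℝ`. -/
def complexGradient (u : ℝ × ℝ → ℝ) (x : ℝ × ℝ) : ℂ :=
  ((ux u x : ℂ) - Complex.I * (uy u x : ℂ)) / 2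

/-- The Wirtinger derivative `∂φ/∂z = (φ_x - i φ_y)/2` of `φ : ℝ² → ℂ`. -/
def wirtingerZ (φ : ℝ × ℝ → ℂ) (x : ℝ × ℝ) : ℂ :=
  (fderiv ℝ φ x (1, 0) - Complex.I * fderiv ℝ φ x (0, 1)) / 2

/-- The Wirtinger derivative `∂φ/∂z̄ = (φ_x + i φ_y)/2` of `φ : ℝ² → ℂ`. -/
def wirtingerZBar (φ : ℝ × ℝ → ℂ) (x : ℝ × ℝ) : ℂ :=
  (fderiv ℝ φ x (1, 0) + Complex.I * fderiv ℝ φ x (0, 1)) / 2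

/-- The second derivative `D²u(x)[v,w]` of `u : ℝ² → ℝ`. -/
def secondDeriv (u : ℝ × ℝ → ℝ) (x v w : ℝ × ℝ) : ℝ :=
  fderiv ℝ (fderiv ℝ u) x v w

/-- `u` is classically `p`-harmonic at `x₀` (where `∇u(x₀) ≠ 0`):
`Δu(x₀) + (p-2) ⟨D²u(x₀) ∇u(x₀), ∇u(x₀)⟩ / |∇u(x₀)|² = 0`. -/
def ClassicallyPHarmonicAt (p : ℝ) (u : ℝ × ℝ → ℝ) (x₀ : ℝ × ℝ) : Prop :=
  (secondDeriv u x₀ (1, 0) (1, 0) + secondDeriv u x₀ (0, 1) (0, 1)) +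
    (p - 2) * secondDeriv u x₀ (ux u x₀, uy u x₀) (ux u x₀, uy u x₀) /
      ((ux u x₀) ^ 2 + (uy u x₀) ^ 2) = 0

section Wirtinger

variable {u : ℝ × ℝ → ℝ} {x : ℝ × ℝ}

open Complex in
theorem hasFDerivAt_complexGradient (h : DifferentiableAt ℝ (fderiv ℝ u) x) :
    HasFDerivAt (complexGradient u)
      ((2 : ℂ)⁻¹ • (ofRealCLM.comp ((fderiv ℝ (fderiv ℝ u) x).flip (1, 0)) -
        I • ofRealCLM.comp ((fderiv ℝ (fderiv ℝ u) x).flip (0, 1)))) x := by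
  have hpartial (w : ℝ × ℝ) : HasFDerivAt (fun y => (fderiv ℝ u y w : ℂ))
      (ofRealCLM.comp ((fderiv ℝ (fderiv ℝ u) x).flip w)) x :=
    ofRealCLM.hasFDerivAt.comp x (by simpa using h.hasFDerivAt.clm_apply (hasFDerivAt_const w x))
  have hφ : complexGradient u =
      fun y => (2 : ℂ)⁻¹ * ((fderiv ℝ u y (1, 0) : ℂ) - I * fderiv ℝ u y (0, 1)) := by
    funext y
    simp [complexGradient, ux, uy, div_eq_inv_mul]
  rw [hφ]
  exact ((hpartial (1, 0)).sub ((hpartial (0, 1)).const_mul I)).const_mul (2 : ℂ)⁻¹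

theorem fderiv_complexGradient_apply (h : DifferentiableAt ℝ (fderiv ℝ u) x) (v : ℝ × ℝ) :
    fderiv ℝ (complexGradient u) x v =
      ((secondDeriv u x v (1, 0) : ℂ) - Complex.I * secondDeriv u x v (0, 1)) / 2 := by
  rw [(hasFDerivAt_complexGradient h).fderiv]
  simp [secondDeriv, div_eq_inv_mul, mul_sub]

theorem wirtingerZ_complexGradient (h : DifferentiableAt ℝ (fderiv ℝ u) x) :
    wirtingerZ (complexGradient u) x =
      ((secondDeriv u x (1, 0) (1, 0) - secondDeriv u x (0, 1) (0, 1)) / 4 : ℝ) +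
        (-(secondDeriv u x (1, 0) (0, 1) + secondDeriv u x (0, 1) (1, 0)) / 4 : ℝ) * Complex.I := by
  rw [wirtingerZ, fderiv_complexGradient_apply h, fderiv_complexGradient_apply h]
  push_cast
  ring_nf
  rw [Complex.I_sq]
  ring

theorem wirtingerZBar_complexGradient (h : DifferentiableAt ℝ (fderiv ℝ u) x) :
    wirtingerZBar (complexGradient u) x =
      ((secondDeriv u x (1, 0) (1, 0) + secondDeriv u x (0, 1) (0, 1)) / 4 : ℝ) +
        ((secondDeriv u x (0, 1) (1, 0) - secondDeriv u x (1, 0) (0, 1)) / 4 : ℝ) * Complex.I := by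
  rw [wirtingerZBar, fderiv_complexGradient_apply h, fderiv_complexGradient_apply h]
  push_cast
  ring_nf
  rw [Complex.I_sq]
  ring

theorem sq_norm_wirtingerZ_complexGradient (h : DifferentiableAt ℝ (fderiv ℝ u) x) :
    ‖wirtingerZ (complexGradient u) x‖ ^ 2 =
      ((secondDeriv u x (1, 0) (1, 0) - secondDeriv u x (0, 1) (0, 1)) ^ 2 +
        (secondDeriv u x (1, 0) (0, 1) + secondDeriv u x (0, 1) (1, 0)) ^ 2) / 16 := by
  rw [wirtingerZ_complexGradient h, Complex.sq_norm, Complex.normSq_add_mul_I]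
  ring

theorem sq_norm_wirtingerZBar_complexGradient (h : DifferentiableAt ℝ (fderiv ℝ u) x)
    (hsymm : secondDeriv u x (1, 0) (0, 1) = secondDeriv u x (0, 1) (1, 0)) :
    ‖wirtingerZBar (complexGradient u) x‖ ^ 2 =
      (secondDeriv u x (1, 0) (1, 0) + secondDeriv u x (0, 1) (0, 1)) ^ 2 / 16 := by
  rw [wirtingerZBar_complexGradient h, Complex.sq_norm, Complex.normSq_add_mul_I, hsymm]
  ring

end Wirtinger

section Hessian

variable {u : ℝ × ℝ → ℝ} {x : ℝ × ℝ}

open Filter Topology in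
theorem secondDeriv_comm (hu : ∀ᶠ y in 𝓝 x, DifferentiableAt ℝ u y)
    (h : DifferentiableAt ℝ (fderiv ℝ u) x) (v w : ℝ × ℝ) :
    secondDeriv u x v w = secondDeriv u x w v :=
  second_derivative_symmetric_of_eventually (hu.mono fun _ hy => hy.hasFDerivAt) h.hasFDerivAt v w

theorem secondDeriv_apply_self (s t : ℝ) :
    secondDeriv u x (s, t) (s, t) =
      secondDeriv u x (1, 0) (1, 0) * s ^ 2 +
        (secondDeriv u x (1, 0) (0, 1) + secondDeriv u x (0, 1) (1, 0)) * s * t +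
          secondDeriv u x (0, 1) (0, 1) * t ^ 2 := by
  have hst : ((s, t) : ℝ × ℝ) = s • ((1 : ℝ), (0 : ℝ)) + t • ((0 : ℝ), (1 : ℝ)) := by simp
  simp only [secondDeriv, hst, map_add, map_smul, add_apply, smul_apply, smul_eq_mul]
  ring

theorem ClassicallyPHarmonicAt.trace_mul_add_quadForm_eq_zero {p : ℝ}
    (hpde : ClassicallyPHarmonicAt p u x) (hgrad : ux u x ^ 2 + uy u x ^ 2 ≠ 0) :
    (secondDeriv u x (1, 0) (1, 0) + secondDeriv u x (0, 1) (0, 1)) * (ux u x ^ 2 + uy u x ^ 2) +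
      (p - 2) * (secondDeriv u x (1, 0) (1, 0) * ux u x ^ 2 +
        (secondDeriv u x (1, 0) (0, 1) + secondDeriv u x (0, 1) (1, 0)) * ux u x * uy u x +
          secondDeriv u x (0, 1) (0, 1) * uy u x ^ 2) = 0 := by
  rw [ClassicallyPHarmonicAt, secondDeriv_apply_self (ux u x) (uy u x)] at hpde
  field_simp at hpde
  linear_combination hpde

end Hessian

theorem sq_two_mul_quadForm_sub_trace_mul_le (a b c s t : ℝ) :
    (2 * (a * s ^ 2 + b * s * t + c * t ^ 2) - (a + c) * (s ^ 2 + t ^ 2)) ^ 2 ≤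
      ((a - c) ^ 2 + b ^ 2) * (s ^ 2 + t ^ 2) ^ 2 := by
  nlinarith [sq_nonneg ((a - c) * (2 * s * t) - b * (s ^ 2 - t ^ 2))]

theorem mul_sq_trace_le_of_trace_mul_add_quadForm_eq_zero {p a b c s t : ℝ} (hp : 2 ≤ p)
    (hst : 0 < s ^ 2 + t ^ 2)
    (h : (a + c) * (s ^ 2 + t ^ 2) + (p - 2) * (a * s ^ 2 + b * s * t + c * t ^ 2) = 0) :
    p * (a + c) ^ 2 ≤ (p - 2) * ((a - c) ^ 2 + b ^ 2) := by
  set N := s ^ 2 + t ^ 2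
  set Q := a * s ^ 2 + b * s * t + c * t ^ 2
  have hpN : (p * (a + c)) ^ 2 * N ^ 2 ≤ ((p - 2) ^ 2 * ((a - c) ^ 2 + b ^ 2)) * N ^ 2 :=
    calc (p * (a + c)) ^ 2 * N ^ 2 = (p - 2) ^ 2 * (2 * Q - (a + c) * N) ^ 2 := by
          linear_combination 2 * (p * (a + c) * N - (p - 2) * (2 * Q - (a + c) * N)) * h
      _ ≤ (p - 2) ^ 2 * (((a - c) ^ 2 + b ^ 2) * N ^ 2) := by
          gcongr; exact sq_two_mul_quadForm_sub_trace_mul_le a b c s t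
      _ = ((p - 2) ^ 2 * ((a - c) ^ 2 + b ^ 2)) * N ^ 2 := by ring
  have hp2 : (p * (a + c)) ^ 2 ≤ (p - 2) ^ 2 * ((a - c) ^ 2 + b ^ 2) :=
    le_of_mul_le_mul_right hpN (by positivity)
  have hR : 0 ≤ (p - 2) * ((a - c) ^ 2 + b ^ 2) := mul_nonneg (by linarith) (by positivity)
  refine le_of_mul_le_mul_left ?_ (by linarith : 0 < p)
  nlinarith

/-- **Improved Jacobian bound for the complex gradient** (cf. Lemma 2.1 of
Baernstein–Kovalev).  If `u : U → ℝ` (`U ⊂ ℝ²` open) is twice differentiable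
at `x₀ ∈ U` with `∇u(x₀) ≠ 0` and is classically `p`-harmonic at `x₀`, then
the Jacobian determinant `J_φ = |φ_z|² - |φ_{z̄}|²` of the complex gradient
`φ = (u_x - i u_y)/2`, regarded as a map `U → ℝ²`, satisfies
`J_φ(x₀) ≥ (1/(p-1)) (|φ_z(x₀)|² + |φ_{z̄}(x₀)|²) = (1/(p-1)) |∇φ(x₀)|²/2`. -/
theorem complex_gradient_jacobian_bound (p : ℝ) (hp : 2 < p)
    (U : Set (ℝ × ℝ)) (hU : IsOpen U) (x₀ : ℝ × ℝ) (hx₀ : x₀ ∈ U)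
    (u : ℝ × ℝ → ℝ)
    (hdiff : ∀ x ∈ U, DifferentiableAt ℝ u x)
    (hdiff2 : DifferentiableAt ℝ (fderiv ℝ u) x₀)
    (hgrad : (ux u x₀, uy u x₀) ≠ (0, 0))
    (hpde : ClassicallyPHarmonicAt p u x₀) :
    ‖wirtingerZ (complexGradient u) x₀‖ ^ 2 -
        ‖wirtingerZBar (complexGradient u) x₀‖ ^ 2 ≥
      (1 / (p - 1)) *
        (‖wirtingerZ (complexGradient u) x₀‖ ^ 2 +
          ‖wirtingerZBar (complexGradient u) x₀‖ ^ 2) := by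
  have hsymm := secondDeriv_comm (Filter.eventually_of_mem (hU.mem_nhds hx₀) hdiff) hdiff2
    (1, 0) (0, 1)
  have hN : 0 < ux u x₀ ^ 2 + uy u x₀ ^ 2 := by
    rw [Ne, Prod.mk.injEq, not_and_or] at hgrad
    rcases hgrad with h | h
    · positivity
    · positivity
  have hkey := mul_sq_trace_le_of_trace_mul_add_quadForm_eq_zero hp.le hN
    (hpde.trace_mul_add_quadForm_eq_zero hN.ne')
  rw [sq_norm_wirtingerZ_complexGradient hdiff2,
    sq_norm_wirtingerZBar_complexGradient hdiff2 hsymm, ge_iff_le, one_div,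
    inv_mul_le_iff₀ (by linarith)]
  linarith
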